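/- Let $a \in \R^{n\times N}$, $1 \le p < \infty$, $C_G \ge 1$, and let $G$ be a finite collection of maps $g:\{1,\dots,n\}\to\{1,\dots,N\}$ with uniform probability satisfying $\Pro(g(i)=j)=1/N$ for all $i,j$ and $\Pro(g(i_1)=j_1,g(i_2)=j_2)\le C_G/N^2$ for all distinct pairs. Then there exists a constant $C>0$ depending only on $C_G$ such that $\E\Big(\sum_{i=1}^n |a_{ig(i)}|^p\Big)^{1/p} \ge C\Big[\frac{1}{N}\sum_{k=1}^N s(k) + \Big(\frac{1}{N}\sum_{k=N+1}^{nN} s(k)^p\Big)^{1/p}\Big]$, where $(s(k))$ is the decreasing rearrangement of $(|a_{ij}|)$. -/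

import Mathlib

/-!
Write `M g = (∑ᵢ |a i (g i)| ^ p) ^ (1 / p)` and `s` for the decreasing rearrangement of the
`|a i j|`; the two terms are bounded by `𝔼 M` separately.

For `t ≤ 2N`, `g` hits one of the `t` largest entries with probability at least
`t / (4 C_G N)`: apply Bonferroni's inequality to about `min t (N / C_G)` of them, where the
pair bound makes the correction term at most half the main term. On that event `M ≥ s t`, and
summing these tail bounds against the layers `s k - s (k + 1)` gives
`N⁻¹ ∑_{k ≤ N} s k ≤ 4 C_G 𝔼 M`.

For the second term truncate the entries at `σ = s (N + 1)`. Then `Z = ∑ᵢ min |a i (g i)| σ ^ p`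
has mean `W / N`, where `W = ∑ min |a i j| σ ^ p` dominates both `∑_{k > N} s k ^ p` and
`N σ ^ p`; the latter and the pair bound give `𝔼 Z² ≤ (1 + C_G) (W / N)²`, so by Paley–Zygmund
`Z ≥ W / (2N)` with probability at least `1 / (4 (1 + C_G))`, while `M ≥ Z ^ (1 / p)`.
-/

/-- `smat a k` is the `k`-th largest entry (1-indexed) of `(|a i j|)`. -/
noncomputable def smat {n N : ℕ} (a : Fin n → Fin N → ℝ) (k : ℕ) : ℝ :=
  (((Finset.univ : Finset (Fin n × Fin N)).toList.map
      (fun p => |a p.1 p.2|)).mergeSort (fun a b => decide (b ≤ a))).getD (k - 1) 0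

open Finset
open scoped BigOperators

section Rearrangement

variable {n N : ℕ} (a : Fin n → Fin N → ℝ)

noncomputable def sortedEntries : List ℝ :=
  ((univ : Finset (Fin n × Fin N)).toList.map fun q => |a q.1 q.2|).mergeSort
    fun x y => decide (y ≤ x)

lemma smat_eq_getD (k : ℕ) : smat a k = (sortedEntries a).getD (k - 1) 0 := rfl

lemma sortedEntries_perm :
    (sortedEntries a).Perm ((univ : Finset (Fin n × Fin N)).toList.map fun q => |a q.1 q.2|) :=
  List.mergeSort_perm _ _

lemma length_sortedEntries : (sortedEntries a).length = n * N := by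
  simp [(sortedEntries_perm a).length_eq]

lemma pairwise_sortedEntries : (sortedEntries a).Pairwise (· ≥ ·) := by
  have h := List.pairwise_mergeSort (le := fun x y : ℝ => decide (y ≤ x))
    (fun x y z hxy hyz => by simp only [decide_eq_true_eq] at *; linarith)
    (fun x y => by simpa using le_total y x)
    ((univ : Finset (Fin n × Fin N)).toList.map fun q => |a q.1 q.2|)
  simpa [sortedEntries] using h

lemma smat_nonneg (k : ℕ) : 0 ≤ smat a k := by
  rw [smat_eq_getD]
  rcases lt_or_ge (k - 1) (sortedEntries a).length with h | h
  · obtain ⟨q, -, hq⟩ := List.mem_map.mp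
      ((sortedEntries_perm a).mem_iff.mp (List.getD_eq_getElem _ _ h ▸ List.getElem_mem h))
    exact hq ▸ abs_nonneg _
  · rw [List.getD_eq_default _ _ h]

lemma smat_eq_zero_of_lt {k : ℕ} (hk : n * N < k) : smat a k = 0 := by
  rw [smat_eq_getD, List.getD_eq_default _ _ (by rw [length_sortedEntries]; omega)]

lemma antitone_smat : Antitone (smat a) := by
  intro k l hkl
  rcases lt_or_ge (l - 1) (sortedEntries a).length with hl | hl
  · have hk : k - 1 < (sortedEntries a).length := by omega
    rw [smat_eq_getD, smat_eq_getD, List.getD_eq_getElem _ _ hl, List.getD_eq_getElem _ _ hk]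
    rcases (Nat.sub_le_sub_right hkl 1).eq_or_lt with he | hlt
    · simp only [he, le_refl]
    · exact List.pairwise_iff_getElem.mp (pairwise_sortedEntries a) _ _ hk hl hlt
  · rw [smat_eq_getD a l, List.getD_eq_default _ _ hl]
    exact smat_nonneg a k

lemma sum_Icc_smat (F : ℝ → ℝ) :
    ∑ k ∈ Icc 1 (n * N), F (smat a k) = ∑ q : Fin n × Fin N, F |a q.1 q.2| := by
  have hrange : ∑ k ∈ range (n * N), F (smat a (k + 1)) = ((sortedEntries a).map F).sum := by
    rw [← Fin.sum_univ_fun_getElem, ← length_sortedEntries a, ← Fin.sum_univ_eq_sum_range]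
    refine sum_congr rfl fun k _ => ?_
    rw [smat_eq_getD, Nat.add_sub_cancel, List.getD_eq_getElem _ _ k.2]
  rw [← Ico_add_one_right_eq_Icc, ← sum_Ico_add' _ 0 (n * N) 1, ← range_eq_Ico, hrange,
    ((sortedEntries_perm a).map F).sum_eq, List.map_map, sum_map_toList]
  rfl

lemma le_card_filter_smat_le {t : ℕ} (ht : t ≤ n * N) :
    t ≤ #{q : Fin n × Fin N | smat a t ≤ |a q.1 q.2|} := by
  have hcount := sum_Icc_smat a fun x => if smat a t ≤ x then (1 : ℝ) else 0
  have : (t : ℝ) ≤ ∑ k ∈ Icc 1 (n * N), if smat a t ≤ smat a k then (1 : ℝ) else 0 := calc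
    (t : ℝ) = ∑ k ∈ Icc 1 t, if smat a t ≤ smat a k then (1 : ℝ) else 0 := by
      rw [sum_congr rfl fun k hk => if_pos (antitone_smat a (mem_Icc.mp hk).2)]
      simp
    _ ≤ _ := sum_le_sum_of_subset_of_nonneg (Icc_subset_Icc_right ht) fun _ _ _ => by positivity
  exact_mod_cast this.trans_eq (hcount.trans (sum_boole _ _))

lemma sum_Icc_rpow_le_sum_min_rpow (K : ℕ) (p : ℝ) :
    ∑ k ∈ Icc (K + 1) (n * N), smat a k ^ p
      ≤ ∑ q : Fin n × Fin N, min |a q.1 q.2| (smat a (K + 1)) ^ p := by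
  rw [← sum_Icc_smat a fun x => min x (smat a (K + 1)) ^ p]
  calc _ = ∑ k ∈ Icc (K + 1) (n * N), min (smat a k) (smat a (K + 1)) ^ p :=
        sum_congr rfl fun k hk => by rw [min_eq_left (antitone_smat a (mem_Icc.1 hk).1)]
    _ ≤ _ := sum_le_sum_of_subset_of_nonneg (Icc_subset_Icc_left (by omega)) fun k _ _ =>
        Real.rpow_nonneg (le_min (smat_nonneg a k) (smat_nonneg a _)) p

lemma mul_rpow_le_sum_min_rpow (K : ℕ) {p : ℝ} (hp : p ≠ 0) :
    K * smat a (K + 1) ^ p ≤ ∑ q : Fin n × Fin N, min |a q.1 q.2| (smat a (K + 1)) ^ p := by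
  rcases le_or_gt K (n * N) with hK | hK
  · rw [← sum_Icc_smat a fun x => min x (smat a (K + 1)) ^ p]
    calc (K : ℝ) * smat a (K + 1) ^ p
        = ∑ k ∈ Icc 1 K, min (smat a k) (smat a (K + 1)) ^ p := by
          rw [sum_congr rfl fun k hk =>
            by rw [min_eq_right (antitone_smat a (by simp at hk; omega))]]
          simp
      _ ≤ _ := sum_le_sum_of_subset_of_nonneg (Icc_subset_Icc_right hK) fun k _ _ =>
          Real.rpow_nonneg (le_min (smat_nonneg a k) (smat_nonneg a _)) p
  · rw [smat_eq_zero_of_lt a (by omega), Real.zero_rpow hp, mul_zero]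
    exact sum_nonneg fun q _ => Real.rpow_nonneg (le_min (abs_nonneg _) le_rfl) p

end Rearrangement

lemma abs_le_rpow_sum_abs_rpow {ι : Type*} [Fintype ι] (x : ι → ℝ) {p : ℝ} (hp : 0 < p)
    (i : ι) : |x i| ≤ (∑ j, |x j| ^ p) ^ (1 / p) := calc
  |x i| = (|x i| ^ p) ^ (1 / p) := by
    rw [← Real.rpow_mul (abs_nonneg _), mul_one_div_cancel hp.ne', Real.rpow_one]
  _ ≤ _ := by
    gcongr
    exact single_le_sum (f := fun j => |x j| ^ p) (fun j _ => by positivity) (mem_univ i)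

section Expectation

variable {α : Type*} (G : Finset α)

lemma expect_boole_eq_card_filter_div (E : α → Prop) [DecidablePred E] :
    𝔼 g ∈ G, (if E g then (1 : ℝ) else 0) = #(G.filter E) / #G := by
  rw [expect_eq_sum_div_card, sum_boole]

lemma expect_comp_eq_sum_mul_expect_boole {β : Type*} [Fintype β] [DecidableEq β]
    (f : α → β) (F : β → ℝ) :
    𝔼 g ∈ G, F (f g) = ∑ b, F b * 𝔼 g ∈ G, (if f g = b then (1 : ℝ) else 0) := by
  simp_rw [mul_expect, ← expect_sum_comm, mul_ite, mul_one, mul_zero, sum_ite_eq, mem_univ,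
    if_true]

lemma mul_expect_boole_le_expect {M : α → ℝ} (hM : ∀ g ∈ G, 0 ≤ M g) {x : ℝ}
    (E : α → Prop) [DecidablePred E] (hE : ∀ g ∈ G, E g → x ≤ M g) :
    x * 𝔼 g ∈ G, (if E g then (1 : ℝ) else 0) ≤ 𝔼 g ∈ G, M g := by
  rw [mul_expect]
  refine expect_le_expect fun g hg => ?_
  split_ifs with h
  · simpa using hE g hg h
  · simpa using hM g hg

lemma paley_zygmund {Z : α → ℝ} (hZ : ∀ g ∈ G, 0 ≤ Z g) :
    (𝔼 g ∈ G, Z g) ^ 2 ≤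
      4 * (𝔼 g ∈ G, Z g ^ 2) * 𝔼 g ∈ G, (if (𝔼 h ∈ G, Z h) / 2 ≤ Z g then (1 : ℝ) else 0) := by
  rcases G.eq_empty_or_nonempty with rfl | hG
  · simp
  set μ := 𝔼 g ∈ G, Z g
  set χ : α → ℝ := fun g => if μ / 2 ≤ Z g then 1 else 0
  have hμ : 0 ≤ μ := expect_nonneg hZ
  have hhalf : μ / 2 ≤ 𝔼 g ∈ G, Z g * χ g := by
    have : μ ≤ 𝔼 g ∈ G, (μ / 2 + Z g * χ g) := expect_le_expect fun g hg => by
      simp only [χ]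
      split_ifs with h <;> linarith
    rw [expect_add_distrib, expect_const hG] at this
    linarith
  have hχ : ∀ g, χ g ^ 2 = χ g := fun g => by simp only [χ]; split_ifs <;> norm_num
  calc μ ^ 2 = 4 * (μ / 2) ^ 2 := by ring
    _ ≤ 4 * (𝔼 g ∈ G, Z g * χ g) ^ 2 := by gcongr
    _ ≤ 4 * ((𝔼 g ∈ G, Z g ^ 2) * 𝔼 g ∈ G, χ g ^ 2) := by
      gcongr; exact expect_mul_sq_le_sq_mul_sq G Z χ
    _ = 4 * (𝔼 g ∈ G, Z g ^ 2) * 𝔼 g ∈ G, χ g := by simp only [hχ]; ring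

lemma sum_range_sub_mul_boole_add_le {s : ℕ → ℝ} (hs : Antitone s) (x : ℝ) (T : ℕ) :
    ∑ k ∈ range T, (s k - s (k + 1)) * (if s k ≤ x then 1 else 0)
        + s T * (if s T ≤ x then 1 else 0) ≤ x * if s T ≤ x then 1 else 0 := by
  induction T with
  | zero => split_ifs <;> simp_all
  | succ T ih =>
    rw [sum_range_succ]
    by_cases hT : s T ≤ x
    · have hT1 : s (T + 1) ≤ x := (hs T.le_succ).trans hT
      simp only [hT, hT1, if_true, mul_one] at ih ⊢
      linarith
    · simp only [hT, if_false, mul_zero, add_zero] at ih ⊢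
      split_ifs <;> linarith

lemma sum_range_succ_eq_sum_mul_sub_add (s : ℕ → ℝ) (T : ℕ) :
    ∑ k ∈ range (T + 1), s k = ∑ k ∈ range T, (k + 1) * (s k - s (k + 1)) + (T + 1) * s T := by
  induction T with
  | zero => simp
  | succ T ih => rw [sum_range_succ, ih, sum_range_succ]; push_cast; ring

lemma mul_sum_range_succ_le_expect {s : ℕ → ℝ} (hs : Antitone s) {T : ℕ} (hsT : 0 ≤ s T)
    {M : α → ℝ} (hM : ∀ g ∈ G, 0 ≤ M g) {c : ℝ}
    (htail : ∀ k ≤ T, c * (k + 1) ≤ 𝔼 g ∈ G, if s k ≤ M g then (1 : ℝ) else 0) :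
    c * ∑ k ∈ range (T + 1), s k ≤ 𝔼 g ∈ G, M g := by
  set P : ℕ → ℝ := fun k => 𝔼 g ∈ G, if s k ≤ M g then (1 : ℝ) else 0
  calc c * ∑ k ∈ range (T + 1), s k
      = ∑ k ∈ range T, (s k - s (k + 1)) * (c * (k + 1)) + s T * (c * (T + 1)) := by
        rw [sum_range_succ_eq_sum_mul_sub_add, mul_add, mul_sum]
        congr 1
        · exact sum_congr rfl fun k _ => by ring
        · ring
    _ ≤ ∑ k ∈ range T, (s k - s (k + 1)) * P k + s T * P T := by
        gcongr with k hk
        · exact sub_nonneg.2 (hs k.le_succ)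
        · exact htail k (mem_range.1 hk).le
        · exact htail T le_rfl
    _ = 𝔼 g ∈ G, (∑ k ∈ range T, (s k - s (k + 1)) * (if s k ≤ M g then 1 else 0)
          + s T * if s T ≤ M g then 1 else 0) := by
        simp only [P, expect_add_distrib, mul_expect, expect_sum_comm]
    _ ≤ 𝔼 g ∈ G, M g := expect_le_expect fun g hg =>
        (sum_range_sub_mul_boole_add_le hs (M g) T).trans (by split_ifs <;> simp [hM g hg])

lemma sum_boole_sub_le_boole_exists {ι : Type*} [DecidableEq ι] (T : Finset ι) (P : ι → Prop)
    [DecidablePred P] :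
    ∑ q ∈ T, (if P q then (1 : ℝ) else 0)
        - (∑ q ∈ T, ∑ r ∈ T.erase q, if P q ∧ P r then (1 : ℝ) else 0) / 2
      ≤ if ∃ q ∈ T, P q then 1 else 0 := by
  set χ : ι → ℝ := fun q => if P q then 1 else 0
  have hpair : ∀ q ∈ T, ∑ r ∈ T.erase q, (if P q ∧ P r then (1 : ℝ) else 0)
      = χ q * ∑ r ∈ T, χ r - χ q := by
    intro q hq
    rw [sum_erase_eq_sub hq, mul_sum]
    simp only [χ, ite_and]
    split_ifs <;> simp
  rw [sum_congr rfl hpair, sum_sub_distrib, ← sum_mul]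
  obtain ⟨m, hm⟩ : ∃ m : ℕ, ∑ q ∈ T, χ q = m := ⟨_, sum_boole _ _⟩
  rw [hm]
  split_ifs with h
  · -- `m - (m ^ 2 - m) / 2 ≤ 1` because `(m - 1) (m - 2) ≥ 0` for every natural `m`
    rcases Nat.lt_or_ge m 2 with hm2 | hm2
    · interval_cases m <;> norm_num
    · have : (2 : ℝ) ≤ m := by exact_mod_cast hm2
      nlinarith
  · have : ∑ q ∈ T, χ q = 0 := sum_eq_zero fun q hq => if_neg fun hq' => h ⟨q, hq, hq'⟩
    simp [← hm, this]

lemma bonferroni {ι : Type*} [DecidableEq ι] (T : Finset ι) (A : ι → α → Prop)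
    [∀ q, DecidablePred (A q)] :
    ∑ q ∈ T, 𝔼 g ∈ G, (if A q g then (1 : ℝ) else 0)
        - (∑ q ∈ T, ∑ r ∈ T.erase q, 𝔼 g ∈ G, if A q g ∧ A r g then (1 : ℝ) else 0) / 2
      ≤ 𝔼 g ∈ G, if ∃ q ∈ T, A q g then (1 : ℝ) else 0 := by
  calc _ = 𝔼 g ∈ G, (∑ q ∈ T, (if A q g then (1 : ℝ) else 0)
        - (∑ q ∈ T, ∑ r ∈ T.erase q, if A q g ∧ A r g then (1 : ℝ) else 0) / 2) := by
        simp only [expect_sub_distrib, ← expect_div, expect_sum_comm]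
    _ ≤ _ := expect_le_expect fun g _ => sum_boole_sub_le_boole_exists T fun q => A q g

end Expectation

section RandomAssignment

variable {n N : ℕ}

def HasUniformMarginals (G : Finset (Fin n → Fin N)) : Prop :=
  ∀ i : Fin n, ∀ j : Fin N, ((G.filter fun g => g i = j).card : ℝ) / G.card = 1 / N

def HasPairwiseBound (CG : ℝ) (G : Finset (Fin n → Fin N)) : Prop :=
  ∀ q r : Fin n × Fin N, q ≠ r →
    ((G.filter fun g => g q.1 = q.2 ∧ g r.1 = r.2).card : ℝ) / G.card ≤ CG / (N : ℝ) ^ 2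

variable {G : Finset (Fin n → Fin N)} {CG : ℝ}

lemma HasUniformMarginals.expect_apply (hG : HasUniformMarginals G) (i : Fin n)
    (F : Fin N → ℝ) : 𝔼 g ∈ G, F (g i) = (∑ j, F j) / N := by
  rw [expect_comp_eq_sum_mul_expect_boole G (fun g => g i), sum_div]
  simp_rw [expect_boole_eq_card_filter_div, hG i, mul_one_div]

lemma HasUniformMarginals.expect_sum_apply (hG : HasUniformMarginals G)
    (f : Fin n → Fin N → ℝ) : 𝔼 g ∈ G, ∑ i, f i (g i) = (∑ i, ∑ j, f i j) / N := by
  simp_rw [expect_sum_comm, hG.expect_apply, sum_div]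

lemma HasPairwiseBound.expect_mul_apply_le (hG : HasPairwiseBound CG G) {i i' : Fin n}
    (hii' : i ≠ i') {F H : Fin N → ℝ} (hF : ∀ j, 0 ≤ F j) (hH : ∀ j, 0 ≤ H j) :
    𝔼 g ∈ G, F (g i) * H (g i') ≤ CG / (N : ℝ) ^ 2 * ((∑ j, F j) * ∑ j, H j) := by
  rw [expect_comp_eq_sum_mul_expect_boole G (fun g => (g i, g i')) fun b => F b.1 * H b.2,
    sum_mul_sum, ← Fintype.sum_prod_type', mul_sum]
  refine sum_le_sum fun b _ => ?_
  simp_rw [Prod.ext_iff, expect_boole_eq_card_filter_div]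
  rw [mul_comm (CG / _)]
  exact mul_le_mul_of_nonneg_left (hG (i, b.1) (i', b.2) (by simp [hii']))
    (mul_nonneg (hF _) (hH _))

lemma expect_sq_sum_apply_le (hG₁ : HasUniformMarginals G) (hG₂ : HasPairwiseBound CG G)
    (hCG : 0 ≤ CG) {f : Fin n → Fin N → ℝ} (hf : ∀ i j, 0 ≤ f i j) :
    𝔼 g ∈ G, (∑ i, f i (g i)) ^ 2
      ≤ (∑ i, ∑ j, f i j ^ 2) / N + CG / (N : ℝ) ^ 2 * (∑ i, ∑ j, f i j) ^ 2 := by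
  set r : Fin n → ℝ := fun i => ∑ j, f i j
  have hr : ∀ i, 0 ≤ r i := fun i => sum_nonneg fun j _ => hf i j
  have hterm : ∀ i i', 𝔼 g ∈ G, f i (g i) * f i' (g i')
      ≤ (if i = i' then (∑ j, f i j ^ 2) / N else 0) + CG / (N : ℝ) ^ 2 * (r i * r i') := by
    intro i i'
    by_cases hii' : i = i'
    · subst hii'
      rw [if_pos rfl, ← hG₁.expect_apply i fun j => f i j ^ 2]
      simp only [← sq]
      exact le_add_of_nonneg_right (by have := hr i; positivity)
    · rw [if_neg hii', zero_add]
      exact hG₂.expect_mul_apply_le hii' (hf i) (hf i')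
  calc 𝔼 g ∈ G, (∑ i, f i (g i)) ^ 2
      = ∑ i, ∑ i', 𝔼 g ∈ G, f i (g i) * f i' (g i') := by
        simp_rw [sq, sum_mul_sum, expect_sum_comm]
    _ ≤ ∑ i, ∑ i', ((if i = i' then (∑ j, f i j ^ 2) / N else 0)
          + CG / (N : ℝ) ^ 2 * (r i * r i')) := by
        gcongr with i _ i' _
        exact hterm i i'
    _ = _ := by
        simp only [sum_add_distrib, sum_ite_eq, mem_univ, if_true]
        rw [← sum_div, sq (univ.sum r), sum_mul_sum, mul_sum]
        exact congrArg _ (sum_congr rfl fun i _ => (mul_sum ..).symm)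

lemma card_div_le_expect_boole_exists_apply_eq (hG₁ : HasUniformMarginals G)
    (hG₂ : HasPairwiseBound CG G) (T : Finset (Fin n × Fin N)) (hT : ((#T : ℝ) - 1) * CG ≤ N) :
    #T / (2 * N) ≤ 𝔼 g ∈ G, if ∃ q ∈ T, g q.1 = q.2 then (1 : ℝ) else 0 := by
  rcases Nat.eq_zero_or_pos N with rfl | hN
  · simp
  have hsingle : ∑ q ∈ T, 𝔼 g ∈ G, (if g q.1 = q.2 then (1 : ℝ) else 0) = #T / N := by
    simp_rw [expect_boole_eq_card_filter_div, hG₁ _ _, sum_const, nsmul_eq_mul, mul_one_div]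
  have hdouble : ∑ q ∈ T, ∑ r ∈ T.erase q,
        𝔼 g ∈ G, (if g q.1 = q.2 ∧ g r.1 = r.2 then (1 : ℝ) else 0)
      ≤ #T * (#T - 1) * (CG / (N : ℝ) ^ 2) := calc
    _ ≤ ∑ q ∈ T, ∑ r ∈ T.erase q, CG / (N : ℝ) ^ 2 := by
      gcongr with q hq r hr
      rw [expect_boole_eq_card_filter_div]
      exact hG₂ q r (ne_of_mem_erase hr).symm
    _ = ∑ q ∈ T, ((#T : ℝ) - 1) * (CG / (N : ℝ) ^ 2) := by
      refine sum_congr rfl fun q hq => ?_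
      rw [sum_const, nsmul_eq_mul, card_erase_of_mem hq, Nat.cast_pred (card_pos.2 ⟨q, hq⟩)]
    _ = _ := by rw [sum_const, nsmul_eq_mul, mul_assoc]
  have hsmall : (#T : ℝ) * (#T - 1) * (CG / (N : ℝ) ^ 2) / 2 ≤ #T / (2 * N) := calc
    _ = #T * ((#T - 1) * CG) / (2 * (N : ℝ) ^ 2) := by ring
    _ ≤ #T * N / (2 * (N : ℝ) ^ 2) := by gcongr
    _ = #T / (2 * N) := by field_simp
  have hbon := bonferroni G T fun q g => g q.1 = q.2
  have hhalf : (#T : ℝ) / N = 2 * (#T / (2 * N)) := by field_simp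
  rw [hsingle] at hbon
  linarith

lemma exists_le_sub_one_mul_le_and_div_le (hCG : 1 ≤ CG) {t : ℕ} (ht : t ≤ 2 * N) :
    ∃ u ≤ t, ((u : ℝ) - 1) * CG ≤ N ∧ t / (4 * CG * N) ≤ u / (2 * N) := by
  have hCG0 : 0 < CG := by linarith
  set m := ⌊(N : ℝ) / CG⌋₊
  have hm : (m : ℝ) * CG ≤ N := (le_div_iff₀ hCG0).1 (Nat.floor_le (by positivity))
  have hm' : (N : ℝ) < (m + 1) * CG := (div_lt_iff₀ hCG0).1 (Nat.lt_floor_add_one _)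
  have htN : (t : ℝ) ≤ 2 * N := by exact_mod_cast ht
  refine ⟨min t (m + 1), min_le_left _ _, ?_, ?_⟩
  · have : ((min t (m + 1) : ℕ) : ℝ) ≤ m + 1 := by exact_mod_cast min_le_right t (m + 1)
    nlinarith
  · rcases Nat.eq_zero_or_pos N with rfl | hN
    · simp
    rw [div_le_div_iff₀ (by positivity) (by positivity)]
    suffices (t : ℝ) ≤ 2 * CG * (min t (m + 1) : ℕ) by nlinarith
    rcases le_total t (m + 1) with h | h
    · rw [min_eq_left h]
      nlinarith
    · rw [min_eq_right h]
      push_cast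
      nlinarith

lemma div_le_expect_boole_smat_le (hG₁ : HasUniformMarginals G) (hG₂ : HasPairwiseBound CG G)
    (hCG : 1 ≤ CG) (hG : G.Nonempty) (a : Fin n → Fin N → ℝ) {M : (Fin n → Fin N) → ℝ}
    (hM0 : ∀ g, 0 ≤ M g) (hM : ∀ g i, |a i (g i)| ≤ M g) {t : ℕ} (ht : t ≤ 2 * N) :
    t / (4 * CG * N) ≤ 𝔼 g ∈ G, if smat a t ≤ M g then (1 : ℝ) else 0 := by
  rcases lt_or_ge (n * N) t with hbig | hsmall
  · simp only [smat_eq_zero_of_lt a hbig, hM0, if_true, expect_const hG]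
    have : (t : ℝ) ≤ 2 * N := by exact_mod_cast ht
    exact div_le_one_of_le₀ (by nlinarith) (by positivity)
  obtain ⟨u, hut, huCG, htu⟩ := exists_le_sub_one_mul_le_and_div_le hCG ht
  obtain ⟨T, hTsub, rfl⟩ := exists_subset_card_eq (hut.trans (le_card_filter_smat_le a hsmall))
  calc (t : ℝ) / (4 * CG * N) ≤ #T / (2 * N) := htu
    _ ≤ 𝔼 g ∈ G, if ∃ q ∈ T, g q.1 = q.2 then (1 : ℝ) else 0 :=
        card_div_le_expect_boole_exists_apply_eq hG₁ hG₂ T huCG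
    _ ≤ _ := expect_le_expect fun g _ => by
        split_ifs with hhit hle <;> norm_num
        obtain ⟨q, hq, hgq⟩ := hhit
        exact hle ((mem_filter.1 (hTsub hq)).2.trans (hgq ▸ hM g q.1))

lemma sum_range_smat_le_expect (hG₁ : HasUniformMarginals G) (hG₂ : HasPairwiseBound CG G)
    (hCG : 1 ≤ CG) (hG : G.Nonempty) (hN : 0 < N) (a : Fin n → Fin N → ℝ)
    {M : (Fin n → Fin N) → ℝ} (hM0 : ∀ g, 0 ≤ M g) (hM : ∀ g i, |a i (g i)| ≤ M g) :
    1 / N * ∑ k ∈ range N, smat a (k + 1) ≤ 4 * CG * 𝔼 g ∈ G, M g := by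
  have hlayer := mul_sum_range_succ_le_expect G (s := fun k => smat a (k + 1))
    (fun _ _ h => antitone_smat a (by omega)) (smat_nonneg a _) (fun g _ => hM0 g)
    (c := 1 / (4 * CG * N)) (T := N) fun k hk => by
      have := div_le_expect_boole_smat_le hG₁ hG₂ hCG hG a hM0 hM (t := k + 1) (by omega)
      push_cast at this
      linarith [show 1 / (4 * CG * N) * (k + 1) = ((k : ℝ) + 1) / (4 * CG * N) by ring]
  rw [sum_range_succ] at hlayer
  have := smat_nonneg a (N + 1)
  have hCG0 : 0 < CG := by linarith
  calc 1 / N * ∑ k ∈ range N, smat a (k + 1)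
      = 4 * CG * (1 / (4 * CG * N) * ∑ k ∈ range N, smat a (k + 1)) := by field_simp
    _ ≤ 4 * CG * (1 / (4 * CG * N) * (∑ k ∈ range N, smat a (k + 1) + smat a (N + 1))) := by
        gcongr; linarith
    _ ≤ 4 * CG * 𝔼 g ∈ G, M g := by gcongr

lemma one_le_mul_expect_boole_half_mean_le_sum_apply (hG₁ : HasUniformMarginals G)
    (hG₂ : HasPairwiseBound CG G) (hCG : 0 ≤ CG) (hN : 0 < N) {f : Fin n → Fin N → ℝ}
    (hf : ∀ i j, 0 ≤ f i j) {b : ℝ} (hfb : ∀ i j, f i j ≤ b)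
    (hbW : N * b ≤ ∑ i, ∑ j, f i j) (hW : 0 < ∑ i, ∑ j, f i j) :
    1 ≤ 4 * (1 + CG) *
      𝔼 g ∈ G, if (∑ i, ∑ j, f i j) / N / 2 ≤ ∑ i, f i (g i) then (1 : ℝ) else 0 := by
  have hpz := paley_zygmund G (Z := fun g => ∑ i, f i (g i)) fun g _ =>
    sum_nonneg fun i _ => hf _ _
  rw [hG₁.expect_sum_apply] at hpz
  set W := ∑ i, ∑ j, f i j
  set P := 𝔼 g ∈ G, if W / N / 2 ≤ ∑ i, f i (g i) then (1 : ℝ) else 0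
  have hP : 0 ≤ P := expect_nonneg fun g _ => by positivity
  have hsq : 𝔼 g ∈ G, (∑ i, f i (g i)) ^ 2 ≤ (1 + CG) * (W / N) ^ 2 := calc
    _ ≤ (∑ i, ∑ j, f i j ^ 2) / N + CG / (N : ℝ) ^ 2 * W ^ 2 :=
        expect_sq_sum_apply_le hG₁ hG₂ hCG hf
    _ ≤ b * W / N + CG / (N : ℝ) ^ 2 * W ^ 2 := by
        have : ∑ i, ∑ j, f i j ^ 2 ≤ b * W := by
          rw [mul_sum]
          gcongr with i _
          rw [mul_sum]
          gcongr with j _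
          rw [sq]
          exact mul_le_mul_of_nonneg_right (hfb i j) (hf i j)
        gcongr
    _ = (N * b) * W / N ^ 2 + CG / (N : ℝ) ^ 2 * W ^ 2 := by field_simp
    _ ≤ W * W / N ^ 2 + CG / (N : ℝ) ^ 2 * W ^ 2 := by gcongr
    _ = (1 + CG) * (W / N) ^ 2 := by ring
  have hWN : 0 < (W / N) ^ 2 := by positivity
  refine le_of_mul_le_mul_left ?_ hWN
  nlinarith

lemma rpow_sum_sum_div_le_expect (hG₁ : HasUniformMarginals G) (hG₂ : HasPairwiseBound CG G)
    (hCG : 0 ≤ CG) (hN : 0 < N) {p : ℝ} (hp : 1 ≤ p) {f : Fin n → Fin N → ℝ}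
    (hf : ∀ i j, 0 ≤ f i j) {b : ℝ} (hfb : ∀ i j, f i j ≤ b) (hbW : N * b ≤ ∑ i, ∑ j, f i j)
    {M : (Fin n → Fin N) → ℝ} (hM : ∀ g, (∑ i, f i (g i)) ^ (1 / p) ≤ M g) :
    ((∑ i, ∑ j, f i j) / N) ^ (1 / p) ≤ 8 * (1 + CG) * 𝔼 g ∈ G, M g := by
  have hp0 : 0 < p := by linarith
  have hM0 : ∀ g, 0 ≤ M g := fun g =>
    (Real.rpow_nonneg (sum_nonneg fun i _ => hf _ _) _).trans (hM g)
  have hE : 0 ≤ 𝔼 g ∈ G, M g := expect_nonneg fun g _ => hM0 g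
  set W := ∑ i, ∑ j, f i j
  have hW0 : 0 ≤ W := sum_nonneg fun i _ => sum_nonneg fun j _ => hf i j
  rcases hW0.eq_or_lt with hW | hW
  · rw [← hW, zero_div, Real.zero_rpow (by positivity)]
    positivity
  set P := 𝔼 g ∈ G, if W / N / 2 ≤ ∑ i, f i (g i) then (1 : ℝ) else 0
  set x := (W / N / 2) ^ (1 / p)
  have hprob : 1 ≤ 4 * (1 + CG) * P :=
    one_le_mul_expect_boole_half_mean_le_sum_apply hG₁ hG₂ hCG hN hf hfb hbW hW
  have hmarkov : x * P ≤ 𝔼 g ∈ G, M g :=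
    mul_expect_boole_le_expect G (fun g _ => hM0 g) _ fun g _ hg =>
      (Real.rpow_le_rpow (by positivity) hg (by positivity)).trans (hM g)
  have htwo : (W / N) ^ (1 / p) ≤ 2 * x := by
    rw [show W / N = 2 * (W / N / 2) by ring, Real.mul_rpow (by norm_num) (by positivity)]
    gcongr
    calc (2 : ℝ) ^ (1 / p) ≤ 2 ^ (1 : ℝ) :=
          Real.rpow_le_rpow_of_exponent_le (by norm_num) ((div_le_one hp0).2 hp)
      _ = 2 := Real.rpow_one 2
  calc _ ≤ 2 * x := htwo
    _ ≤ 2 * x * (4 * (1 + CG) * P) := le_mul_of_one_le_right (by positivity) hprob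
    _ = 8 * (1 + CG) * (x * P) := by ring
    _ ≤ _ := by gcongr

lemma rpow_sum_Icc_smat_le_expect (hG₁ : HasUniformMarginals G) (hG₂ : HasPairwiseBound CG G)
    (hCG : 0 ≤ CG) (hN : 0 < N) (a : Fin n → Fin N → ℝ) {p : ℝ} (hp : 1 ≤ p) :
    (1 / N * ∑ k ∈ Icc (N + 1) (n * N), smat a k ^ p) ^ (1 / p)
      ≤ 8 * (1 + CG) * 𝔼 g ∈ G, (∑ i, |a i (g i)| ^ p) ^ (1 / p) := by
  have hp0 : 0 < p := by linarith
  set σ := smat a (N + 1)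
  have hmin : ∀ i j, 0 ≤ min |a i j| σ := fun i j => le_min (abs_nonneg _) (smat_nonneg a _)
  have htrunc := sum_Icc_rpow_le_sum_min_rpow a N p
  rw [Fintype.sum_prod_type] at htrunc
  have hhead := mul_rpow_le_sum_min_rpow a N hp0.ne'
  rw [Fintype.sum_prod_type] at hhead
  calc (1 / N * ∑ k ∈ Icc (N + 1) (n * N), smat a k ^ p) ^ (1 / p)
      ≤ ((∑ i, ∑ j, min |a i j| σ ^ p) / N) ^ (1 / p) := by
        have : 0 ≤ ∑ k ∈ Icc (N + 1) (n * N), smat a k ^ p :=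
          sum_nonneg fun k _ => Real.rpow_nonneg (smat_nonneg a k) p
        rw [one_div_mul_eq_div]
        gcongr
    _ ≤ _ := rpow_sum_sum_div_le_expect hG₁ hG₂ hCG hN hp
        (fun i j => Real.rpow_nonneg (hmin i j) p)
        (fun i j => Real.rpow_le_rpow (hmin i j) (min_le_right _ _) hp0.le) hhead fun g =>
          Real.rpow_le_rpow (sum_nonneg fun i _ => Real.rpow_nonneg (hmin _ _) p)
            (sum_le_sum fun i _ => Real.rpow_le_rpow (hmin _ _) (min_le_left _ _) hp0.le)
            (by positivity)

end RandomAssignment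

/-- Lower bound of Theorem 1.2: there is a constant `C > 0` depending only on
`C_G` such that `E (∑ᵢ |a_{i g(i)}|^p)^{1/p}` dominates
`C [N⁻¹ ∑_{k=1}^N s(k) + (N⁻¹ ∑_{k=N+1}^{nN} s(k)^p)^{1/p}]`. -/
theorem stmt17 (CG : ℝ) (hCG : 1 ≤ CG) :
    ∃ C : ℝ, 0 < C ∧
      ∀ (n N : ℕ) (a : Fin n → Fin N → ℝ) (p : ℝ), 1 ≤ p →
        ∀ (G : Finset (Fin n → Fin N)), G.Nonempty →
        (∀ i : Fin n, ∀ j : Fin N,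
          ((G.filter fun g => g i = j).card : ℝ) / G.card = 1 / N) →
        (∀ q r : Fin n × Fin N, q ≠ r →
          ((G.filter fun g => g q.1 = q.2 ∧ g r.1 = r.2).card : ℝ) / G.card
            ≤ CG / (N : ℝ) ^ 2) →
        (∑ g ∈ G, (∑ i, |a i (g i)| ^ p) ^ (1 / p)) / G.card
          ≥ C * ((1 / N) * ∑ k ∈ Finset.range N, smat a (k + 1)
            + ((1 / N) * ∑ k ∈ Finset.Icc (N + 1) (n * N), smat a k ^ p) ^ (1 / p)) := by
  have hCG0 : 0 < CG := by linarith
  refine ⟨1 / (20 * CG), by positivity, fun n N a p hp G hG hG₁ hG₂ => ?_⟩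
  have hp0 : 0 < p := by linarith
  rw [ge_iff_le, ← expect_eq_sum_div_card]
  have hE : 0 ≤ 𝔼 g ∈ G, (∑ i, |a i (g i)| ^ p) ^ (1 / p) :=
    expect_nonneg fun g _ => by positivity
  rcases Nat.eq_zero_or_pos N with rfl | hN
  · simpa [Real.zero_rpow (inv_pos.2 hp0).ne'] using hE
  have hA := sum_range_smat_le_expect hG₁ hG₂ hCG hG hN a (fun g => by positivity)
    fun g i => abs_le_rpow_sum_abs_rpow (fun i => a i (g i)) hp0 i
  have hB := rpow_sum_Icc_smat_le_expect hG₁ hG₂ hCG0.le hN a hp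
  rw [one_div, inv_mul_le_iff₀ (by positivity)]
  nlinarith
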